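/- Let Γ = ℤ/12 = ⟨σ⟩ and let M₁, M₂ ⊆ ℤ[Γ] be the ℤ-spans of the Γ-orbits of u₁ = 1+σ+σ²+σ³+σ⁴+σ⁵ and u₂ = 1+σ⁷+σ²+σ³+σ⁴+σ⁵ respectively. Then M₂ ⊆ M₁ and the quotient M₁/M₂ is isomorphic to (ℤ/2)². -/

import Mathlib

/-!
Write `X = of σ`, so that `X ^ 12 = 1`, `u₁ = 1 + X + ⋯ + X ^ 5` and `u₂ = (X ^ 2 - X + 1) * u₁`;
hence `M₁` and `M₂` are the principal ideals `(u₁) ⊇ (u₂)`. Modulo `M₂` we have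
`X ^ 2 * u₁ ≡ X * u₁ - u₁`, so `M₁ / M₂` is generated by the classes of `u₁` and `X * u₁`.
Both classes are `2`-torsion: `u₁` is annihilated by `(X - 1) * (X ^ 6 + 1)`, and
`X ^ 6 + 1 ≡ 2` modulo `X ^ 2 - X + 1`. An explicit `ℤ/2`-valued functional vanishing on `M₂`
separates the two classes, so `M₁ / M₂ ≅ (ℤ/2)²`.
-/

open MonoidAlgebra Submodule

theorem MonoidAlgebra.span_of_mul_eq_ideal_span {k G : Type*} [CommSemiring k] [Monoid G]
    (u : MonoidAlgebra k G) :
    span k {x | ∃ τ : G, x = of k G τ * u} = (Ideal.span {u}).restrictScalars k := by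
  refine le_antisymm (span_le.mpr ?_) fun x hx => ?_
  · rintro _ ⟨τ, rfl⟩
    exact Ideal.mul_mem_left _ _ (Ideal.mem_span_singleton_self u)
  · obtain ⟨a, rfl⟩ := Ideal.mem_span_singleton'.mp hx
    clear hx
    induction a using MonoidAlgebra.induction_linear with
    | zero => simp
    | add a b ha hb => rw [add_mul]; exact add_mem ha hb
    | single g r =>
      rw [← mul_one r, ← smul_single', ← of_apply, smul_mul_assoc]
      exact smul_mem _ r (subset_span ⟨g, rfl⟩)

theorem pow_mul_mem_sup_span_pair {R A : Type*} [CommRing R] [CommRing A] [Algebra R A]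
    (J : Ideal A) {X u : A} (h : (X ^ 2 - X + 1) * u ∈ J) (n : ℕ) :
    X ^ n * u ∈ J.restrictScalars R ⊔ span R {u, X * u} := by
  induction n using Nat.twoStepInduction with
  | zero => exact mem_sup_right (subset_span (by simp))
  | one => exact mem_sup_right (subset_span (by simp))
  | more n ih₀ ih₁ =>
    have hJ : X ^ n * ((X ^ 2 - X + 1) * u) ∈ J.restrictScalars R := J.mul_mem_left _ h
    have hrec : X ^ (n + 2) * u = X ^ (n + 1) * u - X ^ n * u + X ^ n * ((X ^ 2 - X + 1) * u) := by
      ring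
    rw [hrec]
    exact add_mem (sub_mem ih₁ ih₀) (mem_sup_left hJ)

theorem nonempty_quotient_addEquiv_zmod_two_prod {P : Type*} [AddCommGroup P]
    {J M : Submodule ℤ P} {a b : P} (ha : a ∈ M) (hb : b ∈ M) (hM : M ≤ J ⊔ span ℤ {a, b})
    (h2a : (2 : ℤ) • a ∈ J) (h2b : (2 : ℤ) • b ∈ J) (ψ : P →ₗ[ℤ] ZMod 2 × ZMod 2)
    (hψ : J ≤ LinearMap.ker ψ) (hψa : ψ a = (1, 0)) (hψb : ψ b = (0, 1)) :
    Nonempty ((M ⧸ J.comap M.subtype) ≃+ ZMod 2 × ZMod 2) := by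
  let g := ψ ∘ₗ M.subtype
  have hψ_comb (p q : ℤ) : ψ (p • a + q • b) = ((p : ZMod 2), (q : ZMod 2)) := by
    simp [hψa, hψb]
  have hsurj : Function.Surjective g := by
    rintro ⟨x, y⟩
    refine ⟨⟨(x.val : ℤ) • a + (y.val : ℤ) • b, add_mem (M.smul_mem _ ha) (M.smul_mem _ hb)⟩, ?_⟩
    simp [g, hψ_comb]
  have hker : LinearMap.ker g = J.comap M.subtype := by
    ext ⟨v, hv⟩
    refine ⟨fun hv0 => ?_, fun hvJ => hψ hvJ⟩
    obtain ⟨j, hj, w, hw, rfl⟩ := mem_sup.mp (hM hv)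
    obtain ⟨p, q, rfl⟩ := mem_span_pair.mp hw
    have : ((p : ZMod 2), (q : ZMod 2)) = 0 := by
      simpa [g, LinearMap.mem_ker.mp (hψ hj), hψ_comb] using hv0
    obtain ⟨⟨p, rfl⟩, ⟨q, rfl⟩⟩ : (2 : ℤ) ∣ p ∧ (2 : ℤ) ∣ q := by
      simpa [ZMod.intCast_zmod_eq_zero_iff_dvd] using this
    show j + ((2 * p) • a + (2 * q) • b) ∈ J
    rw [mul_comm, mul_smul, mul_comm, mul_smul]
    exact add_mem hj (add_mem (J.smul_mem p h2a) (J.smul_mem q h2b))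
  exact ⟨((quotEquivOfEq _ _ hker.symm).trans (g.quotKerEquivOfSurjective hsurj)).toAddEquiv⟩

theorem ZMod.ofAdd_one_pow_val {n : ℕ} [NeZero n] (τ : Multiplicative (ZMod n)) :
    Multiplicative.ofAdd (1 : ZMod n) ^ τ.toAdd.val = τ := by
  rw [← ofAdd_nsmul, nsmul_one, ZMod.natCast_zmod_val, ofAdd_toAdd]

namespace CyclicGroupRing12

abbrev Γ := Multiplicative (ZMod 12)

def σ : Γ := .ofAdd 1

noncomputable def X : MonoidAlgebra ℤ Γ := of ℤ Γ σ

noncomputable def u₁ : MonoidAlgebra ℤ Γ :=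
  of ℤ Γ 1 + of ℤ Γ σ + of ℤ Γ (σ ^ 2) + of ℤ Γ (σ ^ 3) + of ℤ Γ (σ ^ 4) + of ℤ Γ (σ ^ 5)

noncomputable def u₂ : MonoidAlgebra ℤ Γ :=
  of ℤ Γ 1 + of ℤ Γ (σ ^ 7) + of ℤ Γ (σ ^ 2) + of ℤ Γ (σ ^ 3) + of ℤ Γ (σ ^ 4) + of ℤ Γ (σ ^ 5)

noncomputable def M₁ : Submodule ℤ (MonoidAlgebra ℤ Γ) := span ℤ {x | ∃ τ : Γ, x = of ℤ Γ τ * u₁}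

noncomputable def M₂ : Submodule ℤ (MonoidAlgebra ℤ Γ) := span ℤ {x | ∃ τ : Γ, x = of ℤ Γ τ * u₂}

theorem X_pow_twelve : X ^ 12 = 1 := by
  rw [X, ← map_pow, show σ ^ 12 = 1 by decide, map_one]

theorem u₁_eq : u₁ = 1 + X + X ^ 2 + X ^ 3 + X ^ 4 + X ^ 5 := by
  simp only [u₁, X, map_pow, map_one]

theorem u₂_eq : u₂ = (X ^ 2 - X + 1) * u₁ := by
  simp only [u₂, u₁_eq, X, map_pow, map_one]
  ring

theorem two_mul_u₁ : 2 * u₁ = (X ^ 6 - X ^ 4 - X ^ 3 + X + 2) * u₂ := by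
  rw [u₂_eq, u₁_eq]
  linear_combination (-X) * X_pow_twelve

theorem M₂_eq : M₂ = (Ideal.span {u₂}).restrictScalars ℤ := span_of_mul_eq_ideal_span u₂

theorem M₂_le_M₁ : M₂ ≤ M₁ := by
  rw [M₂_eq, M₁, span_of_mul_eq_ideal_span, restrictScalars_le,
    Ideal.span_singleton_le_span_singleton, u₂_eq]
  exact dvd_mul_left _ _

theorem u₁_mem_M₁ : u₁ ∈ M₁ := subset_span ⟨1, by rw [map_one, one_mul]⟩

theorem X_mul_u₁_mem_M₁ : X * u₁ ∈ M₁ := subset_span ⟨σ, rfl⟩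

theorem M₁_le_sup : M₁ ≤ M₂ ⊔ span ℤ {u₁, X * u₁} := by
  refine span_le.mpr ?_
  rintro _ ⟨τ, rfl⟩
  rw [← ZMod.ofAdd_one_pow_val τ, map_pow, M₂_eq]
  exact pow_mul_mem_sup_span_pair _ (u₂_eq ▸ Ideal.mem_span_singleton_self u₂) _

theorem two_smul_u₁_mem : (2 : ℤ) • u₁ ∈ M₂ := by
  rw [M₂_eq, two_smul, ← two_mul, two_mul_u₁]
  exact Ideal.mul_mem_left _ _ (Ideal.mem_span_singleton_self u₂)

theorem two_smul_X_mul_u₁_mem : (2 : ℤ) • (X * u₁) ∈ M₂ := by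
  have h := two_smul_u₁_mem
  rw [M₂_eq] at h ⊢
  rw [← mul_smul_comm]
  exact Ideal.mul_mem_left _ X h

/- The support `{0, 3, 4, 7}` solves, over `𝔽₂`, the linear conditions that `ε` vanish on the
twelve translates of `u₂` and that `ψ` below send `u₁, X * u₁` to the standard basis. -/
noncomputable def ε : MonoidAlgebra ℤ Γ →ₗ[ℤ] ZMod 2 :=
  (MonoidAlgebra.basis Γ ℤ).constr ℤ fun g =>
    if g.toAdd ∈ ({0, 3, 4, 7} : Finset (ZMod 12)) then 1 else 0

theorem ε_of (g : Γ) :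
    ε (of ℤ Γ g) = if g.toAdd ∈ ({0, 3, 4, 7} : Finset (ZMod 12)) then 1 else 0 :=
  (MonoidAlgebra.basis Γ ℤ).constr_basis ℤ _ g

theorem ε_of_mul_u₂ (τ : Γ) : ε (of ℤ Γ τ * u₂) = 0 := by
  simp only [u₂, mul_add, ← map_mul, map_add, ε_of]
  revert τ
  decide

noncomputable def ψ : MonoidAlgebra ℤ Γ →ₗ[ℤ] ZMod 2 × ZMod 2 := ε.prod (ε ∘ₗ LinearMap.mulLeft ℤ X)

theorem ψ_apply (a : MonoidAlgebra ℤ Γ) : ψ a = (ε a, ε (X * a)) := rfl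

theorem M₂_le_ker_ψ : M₂ ≤ LinearMap.ker ψ := by
  refine span_le.mpr ?_
  rintro _ ⟨τ, rfl⟩
  have hX : X * (of ℤ Γ τ * u₂) = of ℤ Γ (σ * τ) * u₂ := by rw [X, ← mul_assoc, ← map_mul]
  rw [SetLike.mem_coe, LinearMap.mem_ker, ψ_apply, hX, ε_of_mul_u₂, ε_of_mul_u₂, Prod.mk_zero_zero]

theorem ψ_u₁ : ψ u₁ = (1, 0) := by
  rw [ψ_apply]
  simp only [u₁, X, mul_add, ← map_mul, map_add, ε_of]
  decide

theorem ψ_X_mul_u₁ : ψ (X * u₁) = (0, 1) := by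
  rw [ψ_apply]
  simp only [u₁, X, mul_add, ← map_mul, map_add, ε_of]
  decide

end CyclicGroupRing12

/-- In the integral group ring of `Γ = ℤ/12 = ⟨σ⟩`, let `M₁` and `M₂` be the ℤ-spans of
the `Γ`-orbits of `u₁ = 1+σ+σ²+σ³+σ⁴+σ⁵` and `u₂ = 1+σ⁷+σ²+σ³+σ⁴+σ⁵` respectively.
Then `M₂ ⊆ M₁` and `M₁/M₂ ≅ (ℤ/2)²`. -/
theorem stmt_9 :
    letI Γ := Multiplicative (ZMod 12)
    letI σ : Γ := Multiplicative.ofAdd 1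
    letI o := MonoidAlgebra.of ℤ Γ
    letI u₁ := o 1 + o σ + o (σ ^ 2) + o (σ ^ 3) + o (σ ^ 4) + o (σ ^ 5)
    letI u₂ := o 1 + o (σ ^ 7) + o (σ ^ 2) + o (σ ^ 3) + o (σ ^ 4) + o (σ ^ 5)
    letI M₁ := Submodule.span ℤ {x | ∃ τ : Γ, x = o τ * u₁}
    letI M₂ := Submodule.span ℤ {x | ∃ τ : Γ, x = o τ * u₂}
    M₂ ≤ M₁ ∧ Nonempty ((↥M₁ ⧸ (M₂.comap M₁.subtype)) ≃+ (ZMod 2 × ZMod 2)) := by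
  open CyclicGroupRing12 in
  exact ⟨M₂_le_M₁, nonempty_quotient_addEquiv_zmod_two_prod u₁_mem_M₁ X_mul_u₁_mem_M₁
    M₁_le_sup two_smul_u₁_mem two_smul_X_mul_u₁_mem ψ M₂_le_ker_ψ ψ_u₁ ψ_X_mul_u₁⟩
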